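/- In any complex normed space (X, ‖·‖), the angle ∠ has the following properties for all x, y ≠ 0 and all real r, s > 0: ∠(x,x) = 0; ∠(−x,x) = π; ∠(x,y) = conj(∠(y,x)); ∠(r·x, s·y) = ∠(x,y); ∠(−x,−y) = ∠(x,y); and ∠(x,y) + ∠(−x,y) = π. -/

import Mathlib

/-- The real area hyperbolic cosine, `arcosh x = log (x + √(x² − 1))`. -/
noncomputable def arcosh (x : ℝ) : ℝ := Real.log (x + Real.sqrt (x ^ 2 - 1))

/-- `G₋ = √((r²+s²−1)² + 4s²) − (r²+s²)` for `z = r + i·s`. -/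
noncomputable def Gminus (z : ℂ) : ℝ :=
  Real.sqrt ((z.re ^ 2 + z.im ^ 2 - 1) ^ 2 + 4 * z.im ^ 2) - (z.re ^ 2 + z.im ^ 2)

/-- `G₊ = √((r²+s²−1)² + 4s²) + (r²+s²)` for `z = r + i·s`. -/
noncomputable def Gplus (z : ℂ) : ℝ :=
  Real.sqrt ((z.re ^ 2 + z.im ^ 2 - 1) ^ 2 + 4 * z.im ^ 2) + (z.re ^ 2 + z.im ^ 2)

/-- The complex arcsine: `arcsin(r+is) = ½·(sgn r · arccos G₋ + i · sgn s · arcosh G₊)`. -/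
noncomputable def carcsin (z : ℂ) : ℂ :=
  (1 / 2 : ℂ) *
    (((Real.sign z.re * Real.arccos (Gminus z) : ℝ) : ℂ) +
      Complex.I * ((Real.sign z.im * arcosh (Gplus z) : ℝ) : ℂ))

/-- The complex arccosine: `arccos z = π/2 − arcsin z`. -/
noncomputable def carccos (z : ℂ) : ℂ := ((Real.pi / 2 : ℝ) : ℂ) - carcsin z
/-- The continuous product `⟨x|y⟩` in a complex normed space. -/
noncomputable def cprod {X : Type*} [NormedAddCommGroup X] [NormedSpace ℂ X] (x y : X) : ℂ :=
  open scoped Classical in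
  if x = 0 ∨ y = 0 then 0
  else
    ((‖x‖ * ‖y‖ : ℝ) : ℂ) * (1 / 4 : ℂ) *
      (((‖((‖x‖⁻¹ : ℝ) : ℂ) • x + ((‖y‖⁻¹ : ℝ) : ℂ) • y‖ ^ 2
          - ‖((‖x‖⁻¹ : ℝ) : ℂ) • x - ((‖y‖⁻¹ : ℝ) : ℂ) • y‖ ^ 2 : ℝ) : ℂ)
        + Complex.I *
          ((‖((‖x‖⁻¹ : ℝ) : ℂ) • x + Complex.I • (((‖y‖⁻¹ : ℝ) : ℂ) • y)‖ ^ 2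
            - ‖((‖x‖⁻¹ : ℝ) : ℂ) • x - Complex.I • (((‖y‖⁻¹ : ℝ) : ℂ) • y)‖ ^ 2 : ℝ) : ℂ))
/-- The complex angle `∠(x,y) = arccos(⟨x|y⟩ / (‖x‖·‖y‖))`. -/
noncomputable def cangle {X : Type*} [NormedAddCommGroup X] [NormedSpace ℂ X] (x y : X) : ℂ :=
  carccos (cprod x y / ((‖x‖ * ‖y‖ : ℝ) : ℂ))

/-! Both `G₋` and `G₊` are invariant under `z ↦ -z` and `z ↦ conj z`, so the arcsine is odd and
commutes with conjugation; hence `arccos (conj z) = conj (arccos z)` and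
`arccos z + arccos (-z) = π`. On the other side, `⟨x|y⟩ / (‖x‖‖y‖)` is the polarization expression
of the unit vectors `x/‖x‖` and `y/‖y‖`, which is conjugate-symmetric, odd in each argument and
equal to `‖u‖²` on the diagonal. -/

lemma Gminus_neg (z : ℂ) : Gminus (-z) = Gminus z := by
  simp [Gminus]

lemma Gplus_neg (z : ℂ) : Gplus (-z) = Gplus z := by
  simp [Gplus]

lemma Gminus_conj (z : ℂ) : Gminus (starRingEnd ℂ z) = Gminus z := by
  simp [Gminus]

lemma Gplus_conj (z : ℂ) : Gplus (starRingEnd ℂ z) = Gplus z := by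
  simp [Gplus]

lemma carcsin_neg (z : ℂ) : carcsin (-z) = -carcsin z := by
  simp only [carcsin, Gminus_neg, Gplus_neg, Complex.neg_re, Complex.neg_im, Real.sign_neg]
  push_cast
  ring

lemma carcsin_conj (z : ℂ) : carcsin (starRingEnd ℂ z) = starRingEnd ℂ (carcsin z) := by
  simp only [carcsin, Gminus_conj, Gplus_conj, Complex.conj_re, Complex.conj_im, Real.sign_neg,
    map_mul, map_add, map_div₀, map_one, map_ofNat, Complex.conj_ofReal, Complex.conj_I]
  push_cast
  ring

lemma carccos_conj (z : ℂ) : carccos (starRingEnd ℂ z) = starRingEnd ℂ (carccos z) := by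
  simp only [carccos, carcsin_conj, map_sub, Complex.conj_ofReal]

lemma carccos_add_carccos_neg (z : ℂ) : carccos z + carccos (-z) = ((Real.pi : ℝ) : ℂ) := by
  simp only [carccos, carcsin_neg]
  push_cast
  ring

lemma carccos_one : carccos 1 = 0 := by
  have hG : Gminus 1 = -1 := by simp [Gminus]
  simp [carccos, carcsin, hG, Real.arccos_neg_one]
  ring

lemma carccos_neg_one : carccos (-1) = ((Real.pi : ℝ) : ℂ) := by
  simpa [carccos_one] using carccos_add_carccos_neg 1

section PolarForm

variable {X : Type*} [NormedAddCommGroup X] [NormedSpace ℂ X]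

noncomputable def polarForm (u v : X) : ℂ :=
  (1 / 4 : ℂ) *
    (((‖u + v‖ ^ 2 - ‖u - v‖ ^ 2 : ℝ) : ℂ)
      + Complex.I * ((‖u + Complex.I • v‖ ^ 2 - ‖u - Complex.I • v‖ ^ 2 : ℝ) : ℂ))

lemma polarForm_self (u : X) : polarForm u u = ((‖u‖ ^ 2 : ℝ) : ℂ) := by
  have h_add : ‖u + u‖ = 2 * ‖u‖ := by
    rw [← two_smul ℂ u, norm_smul, Complex.norm_two]
  have h_norm_one_add_I : ‖(1 + Complex.I : ℂ)‖ = ‖(1 - Complex.I : ℂ)‖ := by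
    rw [← Complex.norm_conj, map_add, map_one, Complex.conj_I, sub_eq_add_neg]
  have h_I : ‖u + Complex.I • u‖ = ‖u - Complex.I • u‖ := by
    rw [show u + Complex.I • u = (1 + Complex.I) • u by rw [add_smul, one_smul],
      show u - Complex.I • u = (1 - Complex.I) • u by rw [sub_smul, one_smul],
      norm_smul, norm_smul, h_norm_one_add_I]
  simp only [polarForm, h_add, h_I, sub_self, norm_zero]
  push_cast
  ring

lemma polarForm_neg_left (u v : X) : polarForm (-u) v = -polarForm u v := by
  rw [polarForm, polarForm, show -u + v = -(u - v) by abel, show -u - v = -(u + v) by abel,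
    show -u + Complex.I • v = -(u - Complex.I • v) by abel,
    show -u - Complex.I • v = -(u + Complex.I • v) by abel,
    norm_neg, norm_neg, norm_neg, norm_neg]
  push_cast
  ring

lemma polarForm_conj_symm (u v : X) : polarForm v u = starRingEnd ℂ (polarForm u v) := by
  have e1 : v + Complex.I • u = Complex.I • (u - Complex.I • v) := by
    rw [smul_sub, smul_smul, Complex.I_mul_I, neg_one_smul]; abel
  have e2 : v - Complex.I • u = (-Complex.I) • (u + Complex.I • v) := by
    rw [smul_add, smul_smul, neg_mul, Complex.I_mul_I, neg_neg, one_smul, neg_smul]; abel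
  rw [polarForm, polarForm, add_comm v u, norm_sub_rev v u, e1, e2, norm_smul, norm_smul]
  simp only [map_mul, map_add, map_div₀, map_one, map_ofNat, Complex.conj_ofReal,
    Complex.conj_I, Complex.norm_I, norm_neg, one_mul]
  push_cast
  ring

lemma polarForm_neg_neg (u v : X) : polarForm (-u) (-v) = polarForm u v := by
  rw [polarForm_neg_left, polarForm_conj_symm (-v) u, polarForm_neg_left, map_neg, neg_neg,
    ← polarForm_conj_symm]

noncomputable def unitVec (x : X) : X := ((‖x‖⁻¹ : ℝ) : ℂ) • x

lemma norm_unitVec {x : X} (hx : x ≠ 0) : ‖unitVec x‖ = 1 := by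
  rw [unitVec, norm_smul, Complex.norm_real, norm_inv, norm_norm,
    inv_mul_cancel₀ (norm_ne_zero_iff.mpr hx)]

lemma unitVec_neg (x : X) : unitVec (-x) = -unitVec x := by
  rw [unitVec, unitVec, norm_neg, smul_neg]

lemma unitVec_ofReal_smul (x : X) {r : ℝ} (hr : 0 < r) : unitVec ((r : ℂ) • x) = unitVec x := by
  have hr' : (r : ℂ) ≠ 0 := by exact_mod_cast hr.ne'
  rw [unitVec, unitVec, norm_smul, Complex.norm_real, Real.norm_of_nonneg hr.le, smul_smul]
  congr 1
  push_cast
  field_simp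

lemma cangle_eq_carccos_polarForm {x y : X} (hx : x ≠ 0) (hy : y ≠ 0) :
    cangle x y = carccos (polarForm (unitVec x) (unitVec y)) := by
  have hxy : ((‖x‖ * ‖y‖ : ℝ) : ℂ) ≠ 0 := by
    exact_mod_cast mul_ne_zero (norm_ne_zero_iff.mpr hx) (norm_ne_zero_iff.mpr hy)
  rw [cangle, cprod, if_neg (by tauto), mul_assoc, mul_div_cancel_left₀ _ hxy]
  rfl

end PolarForm

/-- properties (An 2)–(An 7) of the angle in a complex normed space. -/
theorem stmt10 {X : Type*} [NormedAddCommGroup X] [NormedSpace ℂ X] :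
    (∀ x : X, x ≠ 0 → cangle x x = 0) ∧
    (∀ x : X, x ≠ 0 → cangle (-x) x = ((Real.pi : ℝ) : ℂ)) ∧
    (∀ x y : X, x ≠ 0 → y ≠ 0 → cangle x y = starRingEnd ℂ (cangle y x)) ∧
    (∀ (x y : X) (r s : ℝ), x ≠ 0 → y ≠ 0 → 0 < r → 0 < s →
      cangle ((r : ℂ) • x) ((s : ℂ) • y) = cangle x y) ∧
    (∀ x y : X, x ≠ 0 → y ≠ 0 → cangle (-x) (-y) = cangle x y) ∧
    (∀ x y : X, x ≠ 0 → y ≠ 0 → cangle x y + cangle (-x) y = ((Real.pi : ℝ) : ℂ)) := by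
  have polarForm_unitVec_self {x : X} (hx : x ≠ 0) : polarForm (unitVec x) (unitVec x) = 1 := by
    rw [polarForm_self, norm_unitVec hx]; norm_num
  refine ⟨fun x hx => ?_, fun x hx => ?_, fun x y hx hy => ?_, fun x y r s hx hy hr hs => ?_,
    fun x y hx hy => ?_, fun x y hx hy => ?_⟩
  · rw [cangle_eq_carccos_polarForm hx hx, polarForm_unitVec_self hx, carccos_one]
  · rw [cangle_eq_carccos_polarForm (neg_ne_zero.mpr hx) hx, unitVec_neg, polarForm_neg_left,
      polarForm_unitVec_self hx, carccos_neg_one]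
  · rw [cangle_eq_carccos_polarForm hx hy, cangle_eq_carccos_polarForm hy hx,
      polarForm_conj_symm, carccos_conj]
  · rw [cangle_eq_carccos_polarForm (smul_ne_zero (by exact_mod_cast hr.ne') hx)
      (smul_ne_zero (by exact_mod_cast hs.ne') hy), unitVec_ofReal_smul x hr,
      unitVec_ofReal_smul y hs, cangle_eq_carccos_polarForm hx hy]
  · rw [cangle_eq_carccos_polarForm (neg_ne_zero.mpr hx) (neg_ne_zero.mpr hy), unitVec_neg,
      unitVec_neg, polarForm_neg_neg, cangle_eq_carccos_polarForm hx hy]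
  · rw [cangle_eq_carccos_polarForm hx hy, cangle_eq_carccos_polarForm (neg_ne_zero.mpr hx) hy,
      unitVec_neg, polarForm_neg_left, carccos_add_carccos_neg]
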